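/- For every rigid resource monomial a⃗ = (a₁,…,aₙ), Card(D^!(a⃗)) = Card(St_≅(a⃗)) · Card(D⃗(a⃗)): the number of automorphisms of a⃗ in the groupoid of permutation expressions equals the cardinality of its quasi-stabilizer times the product of the numbers of automorphisms of its components. -/

import Mathlib

set_option maxHeartbeats 1000000

/-! ### Rigid resource terms -/

/-- Rigid resource terms (de Bruijn indices for variables):
`a ::= x | λ.a | ⟨a⟩b⃗ | a⊕• | •⊕a` where argument lists are ordered. -/
inductive Rt : Type
  | var : ℕ → Rt
  | lam : Rt → Rt
  | app : Rt → List Rt → Rt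
  | inl : Rt → Rt
  | inr : Rt → Rt
deriving Inhabited

/-- Rigid resource expressions: terms or (rigid) monomials. -/
abbrev REx : Type := Rt ⊕ List Rt

/-! ### Permutation expressions -/

/-- Permutation expressions: rigid expressions with a permutation attached to
each list of arguments. -/
inductive PE : Type
  | var : ℕ → PE
  | lam : PE → PE
  | inl : PE → PE
  | inr : PE → PE
  | app : PE → PE → PE
  | mon : (n : ℕ) → Equiv.Perm (Fin n) → List PE → PE

mutual
  /-- `Maps ε a a'` means that the permutation expression `ε` maps the rigid
  term `a` to the rigid term `a'`, i.e. `ε : a ≅ a'`. -/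
  inductive Maps : PE → Rt → Rt → Prop
    | var (x : ℕ) : Maps (.var x) (.var x) (.var x)
    | lam {α a a'} : Maps α a a' → Maps (.lam α) (.lam a) (.lam a')
    | inl {α a a'} : Maps α a a' → Maps (.inl α) (.inl a) (.inl a')
    | inr {α a a'} : Maps α a a' → Maps (.inr α) (.inr a) (.inr a')
    | app {γ δ : PE} {c c' : Rt} {ds ds' : List Rt} :
        Maps γ c c' → MapsM δ ds ds' → Maps (.app γ δ) (.app c ds) (.app c' ds')
  /-- `MapsM δ b⃗ b⃗'` means that the permutation monomial `δ = (σ,α₁,…,αₙ)`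
  maps the rigid monomial `b⃗` to `b⃗'`, with `αᵢ : bᵢ ≅ b'_{σ(i)}`. -/
  inductive MapsM : PE → List Rt → List Rt → Prop
    | mon {n : ℕ} (σ : Equiv.Perm (Fin n)) (αs : List PE) (as as' : List Rt)
        (hα : αs.length = n) (ha : as.length = n) (ha' : as'.length = n)
        (H : ∀ i : Fin n,
          Maps (αs.get (i.cast hα.symm)) (as.get (i.cast ha.symm))
            (as'.get ((σ i).cast ha'.symm))) :
        MapsM (.mon n σ αs) as as'
end

/-- `ε : r ≅ r'` at the level of rigid expressions. -/
def MapsE : PE → REx → REx → Prop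
  | ε, .inl a, .inl a' => Maps ε a a'
  | δ, .inr l, .inr l' => MapsM δ l l'
  | _, _, _ => False

/-! ### Isomorphism of rigid expressions, via permutation expressions -/

/-- Two rigid terms are isomorphic (`≅`) when some permutation expression maps
one to the other. -/
def IsoT (a a' : Rt) : Prop := ∃ ε : PE, Maps ε a a'

/-- Isomorphism of rigid monomials. -/
def IsoM (l l' : List Rt) : Prop := ∃ δ : PE, MapsM δ l l'

/-- Isomorphism of rigid expressions. -/
def IsoE (r r' : REx) : Prop := ∃ ε : PE, MapsE ε r r'

/-!
An automorphism `(σ, α₁, …, αₙ)` of the monomial `a⃗` is the same thing as a permutation `σ`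
together with isomorphisms `αᵢ : aᵢ ≅ a_{σ(i)}`, and such families exist exactly when `σ` lies in
the quasi-stabilizer. Since permutation expressions form a groupoid, for such a `σ` composing with
a fixed isomorphism `a_{σ(i)} ≅ aᵢ` identifies the isomorphisms `aᵢ ≅ a_{σ(i)}` with the
automorphisms of `aᵢ`.
-/

namespace PE

instance : Inhabited PE := ⟨.var 0⟩

theorem sizeOf_getD_lt_sizeOf_mon (n : ℕ) (σ : Equiv.Perm (Fin n)) (αs : List PE) (k : ℕ) :
    sizeOf (αs.getD k default) < sizeOf (PE.mon n σ αs) := by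
  rcases lt_or_ge k αs.length with h | h
  · have := List.sizeOf_lt_of_mem (αs.getElem_mem h)
    rw [List.getD_eq_getElem _ _ h, mon.sizeOf_spec]
    omega
  · have : 0 < sizeOf αs := by cases αs <;> simp
    rw [List.getD_eq_default _ _ h, mon.sizeOf_spec]
    simp only [default, var.sizeOf_spec, sizeOf_nat]
    omega

def symm : PE → PE
  | .var x => .var x
  | .lam α => .lam α.symm
  | .inl α => .inl α.symm
  | .inr α => .inr α.symm
  | .app γ δ => .app γ.symm δ.symm
  | .mon n σ αs => .mon n σ⁻¹ (List.ofFn fun j => (αs.getD (σ⁻¹ j) default).symm)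
decreasing_by all_goals first | exact sizeOf_getD_lt_sizeOf_mon _ _ _ _ | (simp <;> omega)

/-- Pairs of different shapes are sent to the junk value `default`; they never occur between
composable permutation expressions. -/
def trans : PE → PE → PE
  | .var x, _ => .var x
  | .lam α, .lam β => .lam (α.trans β)
  | .inl α, .inl β => .inl (α.trans β)
  | .inr α, .inr β => .inr (α.trans β)
  | .app γ δ, .app γ' δ' => .app (γ.trans γ') (δ.trans δ')
  | .mon n σ αs, .mon m τ βs =>
      if h : m = n then
        .mon n (σ.trans (h ▸ τ))
          (List.ofFn fun i => (αs.getD i default).trans (βs.getD (σ i) default))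
      else default
  | _, _ => default
termination_by ε => ε
decreasing_by all_goals first | exact sizeOf_getD_lt_sizeOf_mon _ _ _ _ | (simp <;> omega)

end PE

mutual

theorem Maps.trans {ε η : PE} {a b c : Rt} : Maps ε a b → Maps η b c → Maps (ε.trans η) a c
  | .var x, .var _ => by rw [PE.trans]; exact .var x
  | .lam h, .lam h' => by rw [PE.trans]; exact .lam (h.trans h')
  | .inl h, .inl h' => by rw [PE.trans]; exact .inl (h.trans h')
  | .inr h, .inr h' => by rw [PE.trans]; exact .inr (h.trans h')
  | .app h₁ h₂, .app h₁' h₂' => by rw [PE.trans]; exact .app (h₁.trans h₁') (h₂.trans h₂')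

theorem MapsM.trans {δ δ' : PE} {as bs cs : List Rt} :
    MapsM δ as bs → MapsM δ' bs cs → MapsM (δ.trans δ') as cs
  | .mon σ αs _ _ hα ha hb H, .mon τ βs _ _ hβ hb' hc H' => by
    obtain rfl : _ = _ := hb'.symm.trans hb
    rw [PE.trans, dif_pos rfl]
    refine .mon _ _ _ _ List.length_ofFn ha hc fun i => ?_
    simpa [List.getElem?_eq_getElem, hα, hβ] using (H i).trans (H' (σ i))

end

mutual

theorem Maps.symm {ε : PE} {a b : Rt} : Maps ε a b → Maps ε.symm b a
  | .var x => by rw [PE.symm]; exact .var x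
  | .lam h => by rw [PE.symm]; exact .lam h.symm
  | .inl h => by rw [PE.symm]; exact .inl h.symm
  | .inr h => by rw [PE.symm]; exact .inr h.symm
  | .app h₁ h₂ => by rw [PE.symm]; exact .app h₁.symm h₂.symm

theorem MapsM.symm {δ : PE} {as bs : List Rt} : MapsM δ as bs → MapsM δ.symm bs as
  | .mon σ αs _ _ hα ha hb H => by
    rw [PE.symm]
    refine .mon _ _ _ _ List.length_ofFn hb ha fun j => ?_
    simpa [List.getElem?_eq_getElem, hα] using (H (σ⁻¹ j)).symm

end

mutual

theorem Maps.symm_symm {ε : PE} {a b : Rt} : Maps ε a b → ε.symm.symm = ε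
  | .var x => by rw [PE.symm, PE.symm]
  | .lam h => by rw [PE.symm, PE.symm, h.symm_symm]
  | .inl h => by rw [PE.symm, PE.symm, h.symm_symm]
  | .inr h => by rw [PE.symm, PE.symm, h.symm_symm]
  | .app h₁ h₂ => by rw [PE.symm, PE.symm, h₁.symm_symm, h₂.symm_symm]

theorem MapsM.symm_symm {δ : PE} {as bs : List Rt} : MapsM δ as bs → δ.symm.symm = δ
  | .mon σ αs _ _ hα ha hb H => by
    rw [PE.symm, PE.symm, inv_inv]
    congr 1
    refine List.ext_getElem (by simp [hα]) fun i h₁ _ => ?_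
    simpa [List.getElem?_eq_getElem, hα] using (H ⟨i, by omega⟩).symm_symm

end

mutual

theorem Maps.trans_trans_symm {ε η : PE} {a b c : Rt} :
    Maps ε a b → Maps η b c → (ε.trans η).trans η.symm = ε
  | .var x, .var _ => by rw [PE.trans, PE.trans]
  | .lam h, .lam h' => by rw [PE.trans, PE.symm, PE.trans, h.trans_trans_symm h']
  | .inl h, .inl h' => by rw [PE.trans, PE.symm, PE.trans, h.trans_trans_symm h']
  | .inr h, .inr h' => by rw [PE.trans, PE.symm, PE.trans, h.trans_trans_symm h']
  | .app h₁ h₂, .app h₁' h₂' => by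
    rw [PE.trans, PE.symm, PE.trans, h₁.trans_trans_symm h₁', h₂.trans_trans_symm h₂']

theorem MapsM.trans_trans_symm {δ δ' : PE} {as bs cs : List Rt} :
    MapsM δ as bs → MapsM δ' bs cs → (δ.trans δ').trans δ'.symm = δ
  | .mon σ αs _ _ hα ha hb H, .mon τ βs _ _ hβ hb' hc H' => by
    obtain rfl : _ = _ := hb'.symm.trans hb
    rw [PE.trans, dif_pos rfl, PE.symm, PE.trans, dif_pos rfl]
    have hperm : (σ.trans τ).trans τ⁻¹ = σ := by ext; simp
    rw [hperm]
    congr 1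
    refine List.ext_getElem (by simp [hα]) fun i h₁ _ => ?_
    simpa [List.getElem?_eq_getElem, hα, hβ] using
      (H ⟨i, by simpa using h₁⟩).trans_trans_symm (H' _)

end

def Maps.transEquiv {η : PE} {a b c : Rt} (hη : Maps η b c) :
    {ε : PE // Maps ε a b} ≃ {ε : PE // Maps ε a c} where
  toFun ε := ⟨ε.1.trans η, ε.2.trans hη⟩
  invFun ζ := ⟨ζ.1.trans η.symm, ζ.2.trans hη.symm⟩
  left_inv ε := Subtype.ext (ε.2.trans_trans_symm hη)
  right_inv ζ := Subtype.ext (by simpa [hη.symm_symm] using ζ.2.trans_trans_symm hη.symm)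

theorem IsoT.symm {a b : Rt} : IsoT a b → IsoT b a
  | ⟨_, h⟩ => ⟨_, h.symm⟩

theorem MapsM.mon_ofFn {as : List Rt} {σ : Equiv.Perm (Fin as.length)} {f : Fin as.length → PE}
    (h : ∀ i, Maps (f i) (as.get i) (as.get (σ i))) :
    MapsM (.mon as.length σ (List.ofFn f)) as as :=
  .mon σ _ as as List.length_ofFn rfl rfl fun i => by simpa using h i

theorem MapsM.exists_eq_mon_ofFn {δ : PE} {as : List Rt} (h : MapsM δ as as) :
    ∃ (σ : Equiv.Perm (Fin as.length)) (f : Fin as.length → PE),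
      (∀ i, Maps (f i) (as.get i) (as.get (σ i))) ∧ δ = .mon as.length σ (List.ofFn f) := by
  cases h with | mon σ αs _ _ hα ha _ H =>
  subst ha
  refine ⟨σ, fun i => αs.get (i.cast hα.symm), fun i => by simpa using H i, ?_⟩
  congr
  exact List.ext_get (by simp [hα]) fun i _ _ => by simp

noncomputable def MapsM.autEquiv (as : List Rt) :
    {δ : PE // MapsM δ as as} ≃
      Σ σ : Equiv.Perm (Fin as.length), ∀ i, {ε : PE // Maps ε (as.get i) (as.get (σ i))} :=
  .symm <| .ofBijective
    (fun p => ⟨.mon as.length p.1 (List.ofFn fun i => (p.2 i).1), MapsM.mon_ofFn fun i => (p.2 i).2⟩)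
    ⟨fun ⟨σ, f⟩ ⟨τ, g⟩ h => by
      simp only [Subtype.mk.injEq, PE.mon.injEq, heq_eq_eq, List.ofFn_inj, true_and] at h
      obtain ⟨rfl, hfg⟩ := h
      exact Sigma.ext rfl (heq_of_eq (funext fun i => Subtype.ext (congrFun hfg i))),
    fun ⟨δ, h⟩ => by
      obtain ⟨σ, f, hf, rfl⟩ := h.exists_eq_mon_ofFn
      exact ⟨⟨σ, fun i => ⟨f i, hf i⟩⟩, rfl⟩⟩

theorem card_monomial_automorphisms (as : List Rt) :
    Nat.card {δ : PE // MapsM δ as as} =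
      Nat.card ({σ : Equiv.Perm (Fin as.length) // ∀ i, IsoT (as.get i) (as.get (σ i))} ×
        (∀ i : Fin as.length, {ε : PE // Maps ε (as.get i) (as.get i)})) := by
  calc Nat.card {δ : PE // MapsM δ as as}
      = Nat.card (Σ σ : Equiv.Perm (Fin as.length),
          ∀ i, {ε : PE // Maps ε (as.get i) (as.get (σ i))}) :=
        Nat.card_congr (MapsM.autEquiv as)
    _ = Nat.card (Σ σ : {σ : Equiv.Perm (Fin as.length) // ∀ i, IsoT (as.get i) (as.get (σ i))},
          ∀ i, {ε : PE // Maps ε (as.get i) (as.get (σ.1 i))}) :=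
        Nat.card_congr (Equiv.sigmaSubtypeEquivOfSubset _ _ fun _ f i => ⟨_, (f i).2⟩).symm
    _ = Nat.card (Σ _ : {σ : Equiv.Perm (Fin as.length) // ∀ i, IsoT (as.get i) (as.get (σ i))},
          ∀ i, {ε : PE // Maps ε (as.get i) (as.get i)}) :=
        Nat.card_congr (Equiv.sigmaCongrRight fun σ =>
          Equiv.piCongrRight fun i => (σ.2 i).symm.choose_spec.transEquiv)
    _ = _ := Nat.card_congr (Equiv.sigmaEquivProd _ _)
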